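/- arXiv:2506.22558 — 5 statements merged into one kernel-verified Lean document; each statement's English description precedes it below -/
import Mathlib

section
/- Let σ₀ ∈ ∂K and ν₀ in the normal cone of K at σ₀, and for λ > 0 set ε_λ := A⁻¹σ₀ + λν₀. Then ψ(ε_λ) = (1/2)⟨A⁻¹σ₀, σ₀⟩ + λ⟨σ₀, ν₀⟩; in particular ψ grows at most linearly along the ray λ ↦ ε_λ. -/
open scoped RealInnerProductSpace

/-- For `σ₀ ∈ ∂K`, `ν₀` in the normal cone of `K` at `σ₀`, `ε₀ = A⁻¹σ₀` and
`λ > 0`, the energy `ψ(ε₀ + λν₀)` equals `(1/2)⟨A⁻¹σ₀, σ₀⟩ + λ⟨σ₀, ν₀⟩`;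
in particular `ψ` grows (at most) linearly along the ray `λ ↦ ε₀ + λν₀`. -/
theorem energy_linear_growth_along_normal_ray
    {M : Type*} [NormedAddCommGroup M] [InnerProductSpace ℝ M] [FiniteDimensional ℝ M]
    (A : M →ₗ[ℝ] M)
    (hA_symm : ∀ x y : M, ⟪A x, y⟫ = ⟪x, A y⟫)
    (hA_pos : ∀ x : M, x ≠ 0 → 0 < ⟪A x, x⟫)
    (K : Set M) (hK_closed : IsClosed K) (hK_conv : Convex ℝ K)
    (hK0 : (0 : M) ∈ interior K)
    (σ₀ : M) (hσ₀ : σ₀ ∈ frontier K)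
    (ν₀ : M) (hν₀ : ∀ σ ∈ K, (0 : ℝ) ≤ ⟪σ₀ - σ, ν₀⟫)
    (ε₀ : M) (hε₀ : A ε₀ = σ₀)
    (lam : ℝ) (hlam : 0 < lam) :
    (⨅ p : M, ((((1/2 : ℝ) * ⟪A (ε₀ + lam • ν₀ - p), ε₀ + lam • ν₀ - p⟫ : ℝ) : EReal)
          + ⨆ σ ∈ K, ((⟪σ, p⟫ : ℝ) : EReal)))
      = ((((1/2 : ℝ) * ⟪ε₀, σ₀⟫ + lam * ⟪σ₀, ν₀⟫ : ℝ)) : EReal) := by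
  have hσ₀K : σ₀ ∈ K := by
    have := hσ₀.1
    rwa [hK_closed.closure_eq] at this
  have hA_nonneg : ∀ x : M, (0 : ℝ) ≤ ⟪A x, x⟫ := by
    intro x
    by_cases hx : x = 0
    · simp [hx]
    · exact (hA_pos x hx).le
  apply le_antisymm
  · -- upper bound: take p = lam • ν₀
    refine le_trans (iInf_le _ (lam • ν₀)) ?_
    have hquad : ε₀ + lam • ν₀ - lam • ν₀ = ε₀ := by abel
    rw [hquad, hε₀]
    have hsup : (⨆ σ ∈ K, ((⟪σ, lam • ν₀⟫ : ℝ) : EReal))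
        = ((lam * ⟪σ₀, ν₀⟫ : ℝ) : EReal) := by
      apply le_antisymm
      · refine iSup₂_le fun σ hσ => ?_
        rw [EReal.coe_le_coe_iff]
        have h := hν₀ σ hσ
        rw [inner_sub_left] at h
        rw [real_inner_smul_right]
        nlinarith
      · refine le_trans (le_of_eq ?_) (le_iSup₂ (f := fun σ _ => ((⟪σ, lam • ν₀⟫ : ℝ) : EReal)) σ₀ hσ₀K)
        rw [real_inner_smul_right]
      
    rw [hsup, ← EReal.coe_add, EReal.coe_le_coe_iff, real_inner_comm]
  · -- lower bound
    refine le_iInf fun p => ?_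
    have hsingle : ((⟪σ₀, p⟫ : ℝ) : EReal) ≤ ⨆ σ ∈ K, ((⟪σ, p⟫ : ℝ) : EReal) :=
      le_iSup₂ (f := fun σ _ => ((⟪σ, p⟫ : ℝ) : EReal)) σ₀ hσ₀K
    refine le_trans ?_ (add_le_add_right hsingle _)
    rw [← EReal.coe_add, EReal.coe_le_coe_iff]
    set q : M := ε₀ + lam • ν₀ - p with hq
    have hp : p = ε₀ + lam • ν₀ - q := by rw [hq]; abel
    clear_value q
    have key : (0 : ℝ) ≤ ⟪A (q - ε₀), q - ε₀⟫ := hA_nonneg _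
    have hexp : ⟪A (q - ε₀), q - ε₀⟫
        = ⟪A q, q⟫ - 2 * ⟪σ₀, q⟫ + ⟪σ₀, ε₀⟫ := by
      rw [map_sub, inner_sub_left, inner_sub_right, inner_sub_right, hε₀,
        hA_symm q ε₀, hε₀, real_inner_comm q σ₀]
      ring
    have hpσ : ⟪σ₀, p⟫ = ⟪σ₀, ε₀⟫ + lam * ⟪σ₀, ν₀⟫ - ⟪σ₀, q⟫ := by
      rw [hp, inner_sub_right, inner_add_right, real_inner_smul_right]
    have hcomm : ⟪σ₀, ε₀⟫ = ⟪ε₀, σ₀⟫ := real_inner_comm ε₀ σ₀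
    rw [hpσ]
    nlinarith
end

section
/- Let σ be a 3×3 real symmetric matrix with ordered eigenvalues σ_I ≥ σ_II ≥ σ_III, and let n be a unit vector in ℝ³. Write Σ := ⟨σn, n⟩ and T := σn − Σn. Then (Σ − (σ_I+σ_III)/2)² + ‖T‖² ≤ ((σ_I−σ_III)/2)². In other words, the stress vector σn lies in the ball of radius (σ_I−σ_III)/2 centered at ((σ_I+σ_III)/2)·n plus its orthogonal complement, in the Mohr representation. -/
/-!
Expand `n` in the orthonormal eigenbasis, with coefficients `cᵢ`. Completing the square,
`((σ_I - σ_III)/2)² - (Σ - (σ_I + σ_III)/2)² - ‖T‖² = -⟨σn - σ_I n, σn - σ_III n⟩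
= ∑ᵢ cᵢ² (σ_I - μᵢ)(μᵢ - σ_III)`, and every term is nonnegative because `σ_III ≤ μᵢ ≤ σ_I`.
-/

open Matrix

theorem dotProduct_sub_smul_sub_smul_eq {ι : Type*} [Fintype ι] (v n : ι → ℝ)
    (hn : n ⬝ᵥ n = 1) (a b : ℝ) :
    (v ⬝ᵥ n - (a + b) / 2) ^ 2 + (v - (v ⬝ᵥ n) • n) ⬝ᵥ (v - (v ⬝ᵥ n) • n)
      = ((a - b) / 2) ^ 2 + (v - a • n) ⬝ᵥ (v - b • n) := by
  simp only [sub_dotProduct, dotProduct_sub, smul_dotProduct, dotProduct_smul, smul_eq_mul, hn,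
    dotProduct_comm n v]
  ring

section OrthonormalEigenbasis

variable {ι : Type*} [Fintype ι] [DecidableEq ι] {e : ι → ι → ℝ}

theorem of_mul_transpose_eq_one_of_orthonormal
    (horth : ∀ i j, e i ⬝ᵥ e j = if i = j then 1 else 0) :
    of e * (of e)ᵀ = 1 := by
  ext i j
  simpa [mul_apply, one_apply, dotProduct] using horth i j

theorem dotProduct_eq_sum_of_orthonormal (horth : ∀ i j, e i ⬝ᵥ e j = if i = j then 1 else 0)
    (v w : ι → ℝ) : v ⬝ᵥ w = ∑ i, (e i ⬝ᵥ v) * (e i ⬝ᵥ w) := by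
  have hE : (of e)ᵀ * of e = 1 :=
    mul_eq_one_comm.mp (of_mul_transpose_eq_one_of_orthonormal horth)
  calc v ⬝ᵥ w = (of e *ᵥ v) ⬝ᵥ (of e *ᵥ w) := by
        rw [dotProduct_mulVec, ← mulVec_transpose, mulVec_mulVec, hE, one_mulVec]
    _ = ∑ i, (e i ⬝ᵥ v) * (e i ⬝ᵥ w) := rfl

theorem dotProduct_mulVec_of_orthonormal_eigen {σ : Matrix ι ι ℝ} {μ : ι → ℝ}
    (horth : ∀ i j, e i ⬝ᵥ e j = if i = j then 1 else 0) (heig : ∀ i, σ *ᵥ e i = μ i • e i)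
    (i : ι) (v : ι → ℝ) : e i ⬝ᵥ (σ *ᵥ v) = μ i * (e i ⬝ᵥ v) := by
  set E := of e
  have hE : E * Eᵀ = 1 := of_mul_transpose_eq_one_of_orthonormal horth
  have hσE : σ * Eᵀ = Eᵀ * diagonal μ := by
    ext k j
    rw [mul_diagonal, mul_apply, mul_comm]
    simpa [E, mulVec, dotProduct] using congrFun (heig j) k
  have hEσ : E * σ = diagonal μ * E := calc
    E * σ = E * σ * (Eᵀ * E) := by rw [mul_eq_one_comm.mp hE, Matrix.mul_one]
    _ = E * (σ * Eᵀ) * E := by simp only [Matrix.mul_assoc]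
    _ = diagonal μ * E := by
      rw [hσE, ← Matrix.mul_assoc, hE, Matrix.one_mul]
  have hi := congrFun (congrArg (· *ᵥ v) hEσ) i
  simp only [← mulVec_mulVec, mulVec_diagonal] at hi
  exact hi

theorem dotProduct_sub_smul_sub_smul_nonpos {σ : Matrix ι ι ℝ} {μ : ι → ℝ}
    (horth : ∀ i j, e i ⬝ᵥ e j = if i = j then 1 else 0) (heig : ∀ i, σ *ᵥ e i = μ i • e i)
    {a b : ℝ} (ha : ∀ i, μ i ≤ a) (hb : ∀ i, b ≤ μ i) (n : ι → ℝ) :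
    (σ *ᵥ n - a • n) ⬝ᵥ (σ *ᵥ n - b • n) ≤ 0 := by
  have hcoef : ∀ c i, e i ⬝ᵥ (σ *ᵥ n - c • n) = (μ i - c) * (e i ⬝ᵥ n) := fun c i => by
    rw [dotProduct_sub, dotProduct_smul, dotProduct_mulVec_of_orthonormal_eigen horth heig,
      smul_eq_mul]
    ring
  rw [dotProduct_eq_sum_of_orthonormal horth]
  refine Finset.sum_nonpos fun i _ => ?_
  rw [hcoef, hcoef]
  nlinarith [mul_nonpos_of_nonpos_of_nonneg (sub_nonpos.mpr (ha i)) (sub_nonneg.mpr (hb i)),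
    sq_nonneg (e i ⬝ᵥ n)]

end OrthonormalEigenbasis

theorem mohr_circle_bound_general (σ : Matrix (Fin 3) (Fin 3) ℝ)
    (e : Fin 3 → Fin 3 → ℝ) (μ : Fin 3 → ℝ)
    (horth : ∀ i j, e i ⬝ᵥ e j = if i = j then 1 else 0)
    (heig : ∀ i, σ *ᵥ e i = μ i • e i)
    (hord : μ 1 ≤ μ 0 ∧ μ 2 ≤ μ 1)
    (n : Fin 3 → ℝ) (hn : n ⬝ᵥ n = 1) :
    ((σ *ᵥ n) ⬝ᵥ n - (μ 0 + μ 2) / 2) ^ 2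
      + (σ *ᵥ n - ((σ *ᵥ n) ⬝ᵥ n) • n) ⬝ᵥ (σ *ᵥ n - ((σ *ᵥ n) ⬝ᵥ n) • n)
      ≤ ((μ 0 - μ 2) / 2) ^ 2 := by
  obtain ⟨h10, h21⟩ := hord
  have hmax : ∀ i, μ i ≤ μ 0 := by intro i; fin_cases i <;> simp <;> linarith
  have hmin : ∀ i, μ 2 ≤ μ i := by intro i; fin_cases i <;> simp <;> linarith
  rw [dotProduct_sub_smul_sub_smul_eq _ n hn]
  linarith [dotProduct_sub_smul_sub_smul_nonpos horth heig hmax hmin n]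

/-- Mohr's bound: for a symmetric 3×3 matrix `σ` with ordered eigenvalues
`μ 0 ≥ μ 1 ≥ μ 2` (given by an orthonormal eigenbasis `e`) and a unit vector
`n`, writing `Σ = ⟨σn, n⟩` and `T = σn − Σn`, one has
`(Σ − (σ_I+σ_III)/2)² + ‖T‖² ≤ ((σ_I−σ_III)/2)²`. -/
theorem mohr_circle_bound (σ : Matrix (Fin 3) (Fin 3) ℝ) (hσ : σ.IsSymm)
    (e : Fin 3 → Fin 3 → ℝ) (μ : Fin 3 → ℝ)
    (horth : ∀ i j, e i ⬝ᵥ e j = if i = j then 1 else 0)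
    (heig : ∀ i, σ *ᵥ e i = μ i • e i)
    (hord : μ 1 ≤ μ 0 ∧ μ 2 ≤ μ 1)
    (n : Fin 3 → ℝ) (hn : n ⬝ᵥ n = 1) :
    ((σ *ᵥ n) ⬝ᵥ n - (μ 0 + μ 2) / 2) ^ 2
      + (σ *ᵥ n - ((σ *ᵥ n) ⬝ᵥ n) • n) ⬝ᵥ (σ *ᵥ n - ((σ *ᵥ n) ⬝ᵥ n) • n)
      ≤ ((μ 0 - μ 2) / 2) ^ 2 :=
  mohr_circle_bound_general σ e μ horth heig hord n hn
end

section
/- Let K ⊆ M be closed convex, σ ∈ ∂K, and ν in the normal cone of K at σ. Suppose there exist a unit vector n ∈ ℝ³ and a nonzero vector d ∈ ℝ³ such that ν = (d ⊗ n + n ⊗ d)/2. Then σn lies on the boundary of the convex set K(n) := {τn : τ ∈ K} ⊆ ℝ³, and d lies in the normal cone of K(n) at σn. -/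
/-!
For symmetric `τ` one has `⟨τ, d ⊙ n⟩ = (τ n) · d`, so the normal-cone inequality for `ν = d ⊙ n`
at `σ` in `K` is literally the normal-cone inequality for `d` at `σ n` in `K(n)`. A point of a set
admitting a nonzero normal `d` is a boundary point, since `σ n + t d` lies outside the set for
every `t > 0`.
-/

open Matrix Filter Topology

theorem Matrix.trace_transpose_mul_vecMulVec {m n R : Type*} [Fintype m] [Fintype n]
    [CommSemiring R] (A : Matrix m n R) (x : m → R) (y : n → R) :
    trace (Aᵀ * vecMulVec x y) = x ⬝ᵥ (A *ᵥ y) := by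
  rw [mul_vecMulVec, trace_vecMulVec, mulVec_transpose, dotProduct_mulVec]

theorem Matrix.IsSymm.trace_transpose_mul_symmetrized_vecMulVec {n R : Type*} [Fintype n]
    [Field R] [NeZero (2 : R)] {A : Matrix n n R} (hA : A.IsSymm) (a b : n → R) :
    trace (Aᵀ * ((1/2 : R) • (vecMulVec a b + vecMulVec b a))) = (A *ᵥ b) ⬝ᵥ a := by
  have hba : b ⬝ᵥ (A *ᵥ a) = (A *ᵥ b) ⬝ᵥ a := by
    rw [dotProduct_mulVec, ← mulVec_transpose, hA.eq]
  rw [mul_smul_comm, mul_add, trace_smul, trace_add, trace_transpose_mul_vecMulVec,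
    trace_transpose_mul_vecMulVec, hba, dotProduct_comm, smul_eq_mul]
  field_simp
  ring

theorem mem_frontier_of_dotProduct_sub_nonneg {ι : Type*} [Fintype ι] {S : Set (ι → ℝ)}
    {x d : ι → ℝ} (hx : x ∈ S) (hd : d ≠ 0) (hS : ∀ y ∈ S, 0 ≤ (x - y) ⬝ᵥ d) :
    x ∈ frontier S := by
  have hdd : 0 < d ⬝ᵥ d :=
    (Finset.sum_nonneg fun i _ => mul_self_nonneg (d i)).lt_of_ne'
      (dotProduct_self_eq_zero.not.mpr hd)
  have hout : ∀ t : ℝ, 0 < t → x + t • d ∉ S := fun t ht hmem => by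
    have := hS _ hmem
    rw [sub_add_cancel_left, neg_dotProduct, smul_dotProduct, smul_eq_mul] at this
    nlinarith
  have hlim : Tendsto (fun t : ℝ => x + t • d) (𝓝[>] 0) (𝓝 x) :=
    ((continuous_const.add (continuous_id.smul continuous_const)).tendsto' 0 x
      (by simp)).mono_left nhdsWithin_le_nhds
  rw [frontier_eq_closure_inter_closure]
  exact ⟨subset_closure hx, mem_closure_of_tendsto hlim (eventually_nhdsWithin_of_forall hout)⟩

theorem jump_compatible_normal_gives_boundary_stress_vector_general
    (K : Set (Matrix (Fin 3) (Fin 3) ℝ))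
    (hK_symm : ∀ τ ∈ K, τ.IsSymm)
    (σ : Matrix (Fin 3) (Fin 3) ℝ) (hσK : σ ∈ K)
    (ν : Matrix (Fin 3) (Fin 3) ℝ)
    (hnc : ∀ τ ∈ K, (0 : ℝ) ≤ Matrix.trace ((σ - τ)ᵀ * ν))
    (n d : Fin 3 → ℝ) (hd : d ≠ 0)
    (hν : ν = (1/2 : ℝ) • (vecMulVec d n + vecMulVec n d)) :
    σ *ᵥ n ∈ frontier {v | ∃ τ ∈ K, τ *ᵥ n = v}
    ∧ ∀ τ ∈ K, (0 : ℝ) ≤ (σ *ᵥ n - τ *ᵥ n) ⬝ᵥ d := by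
  have hnormal : ∀ τ ∈ K, (0 : ℝ) ≤ (σ *ᵥ n - τ *ᵥ n) ⬝ᵥ d := fun τ hτ => by
    have hsymm : (σ - τ).IsSymm := (hK_symm σ hσK).sub (hK_symm τ hτ)
    rw [← sub_mulVec, ← hsymm.trace_transpose_mul_symmetrized_vecMulVec, ← hν]
    exact hnc τ hτ
  refine ⟨mem_frontier_of_dotProduct_sub_nonneg ⟨σ, hσK, rfl⟩ hd ?_, hnormal⟩
  rintro _ ⟨τ, hτ, rfl⟩
  exact hnormal τ hτ

/-- If `σ ∈ K` (a closed convex set of symmetric matrices) and `ν` is in the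
normal cone of `K` at `σ` (w.r.t. the trace inner product), and
`ν = (d⊗n + n⊗d)/2` for a unit vector `n` and a nonzero `d`, then the stress
vector `σn` lies on the boundary of `K(n) = {τn : τ ∈ K}` and `d` lies in the
normal cone of `K(n)` at `σn`. -/
theorem jump_compatible_normal_gives_boundary_stress_vector
    (K : Set (Matrix (Fin 3) (Fin 3) ℝ))
    (hK_symm : ∀ τ ∈ K, τ.IsSymm)
    (hK_closed : IsClosed K) (hK_conv : Convex ℝ K)
    (σ : Matrix (Fin 3) (Fin 3) ℝ) (hσK : σ ∈ K)
    (ν : Matrix (Fin 3) (Fin 3) ℝ)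
    (hnc : ∀ τ ∈ K, (0 : ℝ) ≤ Matrix.trace ((σ - τ)ᵀ * ν))
    (n d : Fin 3 → ℝ) (hn : n ⬝ᵥ n = 1) (hd : d ≠ 0)
    (hν : ν = (1/2 : ℝ) • (vecMulVec d n + vecMulVec n d)) :
    σ *ᵥ n ∈ frontier {v | ∃ τ ∈ K, τ *ᵥ n = v}
    ∧ ∀ τ ∈ K, (0 : ℝ) ≤ (σ *ᵥ n - τ *ᵥ n) ⬝ᵥ d :=
  jump_compatible_normal_gives_boundary_stress_vector_general K hK_symm σ hσK ν hnc n d hd hν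
end

section
/- Von Mises uniaxial tension is not jump-compatible: let K = {σ ∈ M : ‖σ − (tr σ/3)I‖ ≤ √2 τ_c} (the von Mises domain with shear strength τ_c > 0) and let σ₀ = √3 τ_c · e₁⊗e₁ for a unit vector e₁. Then σ₀ ∈ ∂K, the (unique up to scaling) outer normal at σ₀ is ν = √3 τ_c (e₁⊗e₁ − I/3) (deviatoric part of σ₀), and there exist no unit vector n and nonzero vector d with ν proportional to (d⊗n + n⊗d)/2. -/
open Matrix

namespace VMaux

noncomputable def ip (A B : Matrix (Fin 3) (Fin 3) ℝ) : ℝ := Matrix.trace (Aᵀ * B)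

lemma ip_eq_sum (A B : Matrix (Fin 3) (Fin 3) ℝ) :
    ip A B = ∑ p : Fin 3 × Fin 3, A p.1 p.2 * B p.1 p.2 := by
  rw [Fintype.sum_prod_type, ip, Matrix.trace]
  simp only [Matrix.diag, Matrix.mul_apply, Matrix.transpose_apply]
  exact Finset.sum_comm

lemma ip_symm (A B : Matrix (Fin 3) (Fin 3) ℝ) : ip A B = ip B A := by
  simp only [ip_eq_sum, mul_comm]

lemma ip_add_right (A B C : Matrix (Fin 3) (Fin 3) ℝ) : ip A (B + C) = ip A B + ip A C := by
  simp [ip, Matrix.mul_add]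

lemma ip_sub_right (A B C : Matrix (Fin 3) (Fin 3) ℝ) : ip A (B - C) = ip A B - ip A C := by
  simp [ip, Matrix.mul_sub]

lemma ip_smul_right (r : ℝ) (A B : Matrix (Fin 3) (Fin 3) ℝ) : ip A (r • B) = r * ip A B := by
  simp [ip, Matrix.mul_smul]

lemma ip_sub_left (A B C : Matrix (Fin 3) (Fin 3) ℝ) : ip (A - B) C = ip A C - ip B C := by
  rw [ip_symm, ip_sub_right, ip_symm C A, ip_symm C B]

lemma ip_add_left (A B C : Matrix (Fin 3) (Fin 3) ℝ) : ip (A + B) C = ip A C + ip B C := by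
  rw [ip_symm, ip_add_right, ip_symm C A, ip_symm C B]

lemma ip_smul_left (r : ℝ) (A B : Matrix (Fin 3) (Fin 3) ℝ) : ip (r • A) B = r * ip A B := by
  rw [ip_symm, ip_smul_right, ip_symm]

lemma ip_one_right (A : Matrix (Fin 3) (Fin 3) ℝ) : ip A 1 = Matrix.trace A := by
  simp [ip, Matrix.trace_transpose]

lemma ip_one_left (A : Matrix (Fin 3) (Fin 3) ℝ) : ip 1 A = Matrix.trace A := by
  rw [ip_symm, ip_one_right]

lemma trace_vmv (a b : Fin 3 → ℝ) : Matrix.trace (vecMulVec a b) = a ⬝ᵥ b := by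
  simp [Matrix.trace, Matrix.diag, vecMulVec_apply, dotProduct]

lemma ip_vmv (a b c d : Fin 3 → ℝ) :
    ip (vecMulVec a b) (vecMulVec c d) = (a ⬝ᵥ c) * (b ⬝ᵥ d) := by
  simp only [ip_eq_sum, Fintype.sum_prod_type, vecMulVec_apply, dotProduct, Finset.sum_mul_sum]
  refine Finset.sum_congr rfl fun i _ => Finset.sum_congr rfl fun j _ => by ring

lemma ip_self_nonneg (A : Matrix (Fin 3) (Fin 3) ℝ) : 0 ≤ ip A A := by
  rw [ip_eq_sum]
  exact Finset.sum_nonneg fun p _ => mul_self_nonneg _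

lemma eq_zero_of_ip_self (A : Matrix (Fin 3) (Fin 3) ℝ) (h : ip A A = 0) : A = 0 := by
  rw [ip_eq_sum] at h
  ext i j
  have := (Finset.sum_eq_zero_iff_of_nonneg (fun p _ => mul_self_nonneg (A p.1 p.2))).1 h
    (i, j) (Finset.mem_univ _)
  exact mul_self_eq_zero.1 this

lemma ip_cauchy (A B : Matrix (Fin 3) (Fin 3) ℝ) : ip A B ^ 2 ≤ ip A A * ip B B := by
  simp only [ip_eq_sum]
  have := Finset.sum_mul_sq_le_sq_mul_sq Finset.univ (fun p : Fin 3 × Fin 3 => A p.1 p.2)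
    (fun p : Fin 3 × Fin 3 => B p.1 p.2)
  simpa [sq, mul_assoc, mul_comm, mul_left_comm] using this

lemma vmv_transpose (a b : Fin 3 → ℝ) : (vecMulVec a b)ᵀ = vecMulVec b a := by
  ext i j; simp [vecMulVec_apply, mul_comm]

lemma vmv_mulVec (a b v : Fin 3 → ℝ) : vecMulVec a b *ᵥ v = (b ⬝ᵥ v) • a := by
  funext i
  simp only [Matrix.mulVec, dotProduct, vecMulVec_apply, Pi.smul_apply, smul_eq_mul,
    Finset.sum_mul, Finset.mul_sum]
  exact Finset.sum_congr rfl fun j _ => by ring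

end VMaux

open VMaux

/-- Von Mises uniaxial tension is not jump-compatible. For the von Mises domain
`K = {σ symmetric : ‖σᴰ‖ ≤ √2 τc}` and `σ₀ = √3 τc e₁⊗e₁`, the state `σ₀` lies
on the boundary of `K` (it is in `K` with `‖σ₀ᴰ‖² = 2τc²`), its outer normal is
`ν = √3 τc (e₁⊗e₁ − I/3)` — unique up to a nonnegative scaling among symmetric
outer normals — and `ν` is not proportional to any `(d⊗n + n⊗d)/2` with `n` a
unit vector and `d ≠ 0`. -/
theorem vonMises_uniaxial_not_jump_compatible
    (τc : ℝ) (hτc : 0 < τc) (e1 : Fin 3 → ℝ) (he1 : e1 ⬝ᵥ e1 = 1) :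
    let dev : Matrix (Fin 3) (Fin 3) ℝ → Matrix (Fin 3) (Fin 3) ℝ :=
      fun σ => σ - (Matrix.trace σ / 3) • (1 : Matrix (Fin 3) (Fin 3) ℝ)
    let K : Set (Matrix (Fin 3) (Fin 3) ℝ) :=
      {σ | σ.IsSymm ∧ Matrix.trace ((dev σ)ᵀ * dev σ) ≤ 2 * τc ^ 2}
    let σ0 : Matrix (Fin 3) (Fin 3) ℝ := (Real.sqrt 3 * τc) • vecMulVec e1 e1
    let ν : Matrix (Fin 3) (Fin 3) ℝ :=
      (Real.sqrt 3 * τc) • (vecMulVec e1 e1 - (1/3 : ℝ) • (1 : Matrix (Fin 3) (Fin 3) ℝ))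
    (σ0 ∈ K ∧ Matrix.trace ((dev σ0)ᵀ * dev σ0) = 2 * τc ^ 2)
    ∧ (∀ τ ∈ K, (0 : ℝ) ≤ Matrix.trace ((σ0 - τ)ᵀ * ν))
    ∧ (∀ ν' : Matrix (Fin 3) (Fin 3) ℝ, ν'.IsSymm →
        (∀ τ ∈ K, (0 : ℝ) ≤ Matrix.trace ((σ0 - τ)ᵀ * ν')) →
        ∃ c : ℝ, 0 ≤ c ∧ ν' = c • ν)
    ∧ ¬ ∃ (n d : Fin 3 → ℝ) (c : ℝ), n ⬝ᵥ n = 1 ∧ d ≠ 0 ∧ c ≠ 0 ∧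
        ν = c • ((1/2 : ℝ) • (vecMulVec d n + vecMulVec n d)) := by
  intro dev K σ0 ν
  set s : ℝ := Real.sqrt 3 * τc with hs_def
  have h3 : Real.sqrt 3 ^ 2 = 3 := Real.sq_sqrt (by norm_num)
  have hs2 : s ^ 2 = 3 * τc ^ 2 := by rw [hs_def, mul_pow, h3]
  have hs_pos : 0 < s := mul_pos (Real.sqrt_pos.2 (by norm_num)) hτc
  have hσ0_def : σ0 = s • vecMulVec e1 e1 := rfl
  have hν_def : ν = s • (vecMulVec e1 e1 - (1/3 : ℝ) • (1 : Matrix (Fin 3) (Fin 3) ℝ)) := rfl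
  have hdev_def : ∀ σ : Matrix (Fin 3) (Fin 3) ℝ,
      dev σ = σ - (Matrix.trace σ / 3) • (1 : Matrix (Fin 3) (Fin 3) ℝ) := fun _ => rfl
  have hK_def : ∀ σ : Matrix (Fin 3) (Fin 3) ℝ,
      σ ∈ K ↔ σ.IsSymm ∧ Matrix.trace ((dev σ)ᵀ * dev σ) ≤ 2 * τc ^ 2 := fun _ => Iff.rfl
  have hip_def : ∀ A B : Matrix (Fin 3) (Fin 3) ℝ, Matrix.trace (Aᵀ * B) = ip A B :=
    fun _ _ => rfl
  clear_value dev K σ0 ν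
  have htr1 : Matrix.trace (1 : Matrix (Fin 3) (Fin 3) ℝ) = 3 := by
    simp [Matrix.trace_one]
  have htrσ0 : Matrix.trace σ0 = s := by
    rw [hσ0_def, Matrix.trace_smul, trace_vmv, he1, smul_eq_mul, mul_one]
  have hdev0 : dev σ0 = ν := by
    rw [hdev_def, htrσ0, hσ0_def, hν_def, smul_sub, smul_smul,
      show s * (1/3 : ℝ) = s / 3 by ring]
  have hνν : ip ν ν = 2 * τc ^ 2 := by
    rw [hν_def]
    simp only [ip_smul_left, ip_smul_right, ip_sub_left, ip_sub_right, ip_vmv,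
      ip_one_left, ip_one_right, trace_vmv, Matrix.trace_smul, Matrix.trace_sub,
      he1, htr1, smul_eq_mul]
    linear_combination (2/3 : ℝ) * hs2
  have htrν : Matrix.trace ν = 0 := by
    rw [hν_def, Matrix.trace_smul, Matrix.trace_sub, trace_vmv, he1, Matrix.trace_smul, htr1]
    simp
  have hσ0symm : σ0.IsSymm := by
    show σ0ᵀ = σ0
    rw [hσ0_def, Matrix.transpose_smul, vmv_transpose]
  have hσ0decomp : σ0 = ν + (s / 3) • 1 := by
    rw [← hdev0, hdev_def, htrσ0]; abel
  have hipone : ∀ (t : ℝ) (A : Matrix (Fin 3) (Fin 3) ℝ),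
      ip (t • (1 : Matrix (Fin 3) (Fin 3) ℝ)) A = t * Matrix.trace A := by
    intro t A; rw [ip_smul_left, ip_one_left]
  have hipσ0 : ∀ A : Matrix (Fin 3) (Fin 3) ℝ, Matrix.trace A = 0 → ip σ0 A = ip ν A := by
    intro A hA
    rw [hσ0decomp, ip_add_left, hipone, hA, mul_zero, add_zero]
  -- Part 1
  have heq1 : Matrix.trace ((dev σ0)ᵀ * dev σ0) = 2 * τc ^ 2 := by
    rw [hip_def, hdev0]; exact hνν
  have hσ0K : σ0 ∈ K := (hK_def σ0).2 ⟨hσ0symm, le_of_eq heq1⟩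
  -- Part 2
  have part2 : ∀ τ ∈ K, (0 : ℝ) ≤ Matrix.trace ((σ0 - τ)ᵀ * ν) := by
    intro τ hτK
    obtain ⟨-, hτn⟩ := (hK_def τ).1 hτK
    rw [hip_def] at hτn ⊢
    have hcs := ip_cauchy (dev τ) ν
    rw [hνν] at hcs
    have hub : ip (dev τ) ν ≤ 2 * τc ^ 2 := by
      nlinarith [ip_self_nonneg (dev τ), sq_nonneg τc, mul_pos hτc hτc]
    have hτdecomp : τ = dev τ + (Matrix.trace τ / 3) • 1 := by
      rw [hdev_def]; abel
    have hipτ : ip τ ν = ip (dev τ) ν := by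
      conv_lhs => rw [hτdecomp]
      rw [ip_add_left, hipone, htrν, mul_zero, add_zero]
    rw [ip_sub_left, hipτ, hipσ0 ν htrν, hνν]
    linarith
  -- Part 3
  have part3 : ∀ ν' : Matrix (Fin 3) (Fin 3) ℝ, ν'.IsSymm →
      (∀ τ ∈ K, (0 : ℝ) ≤ Matrix.trace ((σ0 - τ)ᵀ * ν')) →
      ∃ c : ℝ, 0 ≤ c ∧ ν' = c • ν := by
    intro ν' hsym hnorm
    have hIK : ∀ t : ℝ, σ0 + t • (1 : Matrix (Fin 3) (Fin 3) ℝ) ∈ K := by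
      intro t
      have htr' : Matrix.trace (σ0 + t • (1 : Matrix (Fin 3) (Fin 3) ℝ)) = s + t * 3 := by
        rw [Matrix.trace_add, Matrix.trace_smul, htrσ0, htr1, smul_eq_mul]
      have hdeveq : dev (σ0 + t • (1 : Matrix (Fin 3) (Fin 3) ℝ)) = dev σ0 := by
        rw [hdev_def, hdev_def, htr', htrσ0, show ((s + t * 3) / 3 : ℝ) = s / 3 + t by ring,
          add_smul]
        abel
      refine (hK_def _).2 ⟨?_, ?_⟩
      · show (σ0 + t • (1 : Matrix (Fin 3) (Fin 3) ℝ))ᵀ = _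
        rw [Matrix.transpose_add, Matrix.transpose_smul, Matrix.transpose_one, hσ0symm]
      · rw [hdeveq]
        exact le_of_eq heq1
    have htr : Matrix.trace ν' = 0 := by
      have key : ∀ t : ℝ, 0 ≤ -t * Matrix.trace ν' := by
        intro t
        have h := hnorm _ (hIK t)
        rw [hip_def] at h
        have hsub : σ0 - (σ0 + t • (1 : Matrix (Fin 3) (Fin 3) ℝ)) = (-t) • 1 := by
          rw [neg_smul]; abel
        rw [hsub, hipone] at h
        linarith
      have h1 := key 1
      have h2 := key (-1)
      simp at h1 h2
      linarith
    set q : ℝ := ip ν' ν' with hq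
    have hq0 : 0 ≤ q := ip_self_nonneg ν'
    rcases eq_or_lt_of_le hq0 with hqz | hqpos
    · exact ⟨0, le_refl 0, by rw [zero_smul]; exact eq_zero_of_ip_self ν' hqz.symm⟩
    set r : ℝ := Real.sqrt (2 * τc ^ 2) with hr
    have hr2 : r ^ 2 = 2 * τc ^ 2 := Real.sq_sqrt (by positivity)
    have hrpos : 0 < r := Real.sqrt_pos.2 (by positivity)
    set u : ℝ := Real.sqrt q with hu
    have hu2 : u ^ 2 = q := Real.sq_sqrt hq0
    have hupos : 0 < u := Real.sqrt_pos.2 hqpos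
    have hwK : (r / u) • ν' ∈ K := by
      refine (hK_def _).2 ⟨?_, ?_⟩
      · show ((r / u) • ν')ᵀ = (r / u) • ν'
        rw [Matrix.transpose_smul, hsym]
      · have hdevw : dev ((r / u) • ν') = (r / u) • ν' := by
          rw [hdev_def, Matrix.trace_smul, htr, smul_zero]
          simp
        rw [hip_def, hdevw, ip_smul_left, ip_smul_right, ← hq]
        have hrq : r / u * (r / u * q) = r ^ 2 := by
          rw [← hu2]; field_simp
        rw [hrq, hr2]
    have hkey := hnorm _ hwK
    rw [hip_def] at hkey
    have h1 : ip ((r / u) • ν') ν' = r * u := by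
      rw [ip_smul_left, ← hq, ← hu2]; field_simp
    rw [ip_sub_left, h1, hipσ0 ν' htr] at hkey
    have hlow : r * u ≤ ip ν ν' := by linarith
    set c : ℝ := u / r with hc
    have hcpos : 0 < c := div_pos hupos hrpos
    have hcr : c * r = u := by rw [hc]; field_simp
    refine ⟨c, le_of_lt hcpos, ?_⟩
    have hE : ip (ν' - c • ν) (ν' - c • ν) = q - 2 * c * ip ν ν' + c ^ 2 * (2 * τc ^ 2) := by
      simp only [ip_sub_left, ip_sub_right, ip_smul_left, ip_smul_right]
      rw [hνν, ip_symm ν' ν, ← hq]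
      ring
    have hc2 : c ^ 2 * (2 * τc ^ 2) = u ^ 2 := by rw [← hr2, ← mul_pow, hcr]
    have h2cX : 2 * u ^ 2 ≤ 2 * c * ip ν ν' := by
      have h := mul_le_mul_of_nonneg_left hlow (le_of_lt hcpos)
      have hcu : c * (r * u) = u ^ 2 := by rw [← mul_assoc, hcr]; ring
      nlinarith
    have hEle : ip (ν' - c • ν) (ν' - c • ν) ≤ 0 := by
      rw [hE, hc2]
      have hqu : q = u ^ 2 := hu2.symm
      linarith
    have hEz : ip (ν' - c • ν) (ν' - c • ν) = 0 :=
      le_antisymm hEle (ip_self_nonneg _)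
    exact sub_eq_zero.1 (eq_zero_of_ip_self _ hEz)
  -- Part 4
  refine ⟨⟨hσ0K, heq1⟩, part2, part3, ?_⟩
  rintro ⟨n, d, c, hn, hd, hc, heq⟩
  rw [hν_def] at heq
  let L : (Fin 3 → ℝ) →ₗ[ℝ] (Fin 2 → ℝ) :=
    { toFun := fun v => ![d ⬝ᵥ v, n ⬝ᵥ v]
      map_add' := by
        intro x y; funext i; fin_cases i <;> simp [dotProduct_add]
      map_smul' := by
        intro r x; funext i; fin_cases i <;> simp [dotProduct_smul] }
  have hnotinj : ¬ Function.Injective L := by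
    intro hinj
    have h := LinearMap.finrank_le_finrank_of_injective hinj
    simp [Module.finrank_fin_fun] at h
  obtain ⟨x, y, hxy, hne⟩ := Function.not_injective_iff.1 hnotinj
  set v : Fin 3 → ℝ := x - y with hv_def
  have hv : v ≠ 0 := sub_ne_zero.2 hne
  have hLv : L v = 0 := by rw [hv_def, map_sub, hxy, sub_self]
  have hdv : d ⬝ᵥ v = 0 := by
    have h := congrFun hLv 0
    simpa [L] using h
  have hnv : n ⬝ᵥ v = 0 := by
    have h := congrFun hLv 1
    simpa [L] using h
  have happ := congrArg (fun A => A *ᵥ v) heq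
  simp only [Matrix.smul_mulVec, Matrix.sub_mulVec, Matrix.add_mulVec,
    Matrix.one_mulVec, vmv_mulVec, hdv, hnv, zero_smul, add_zero, smul_zero] at happ
  have hsub : (e1 ⬝ᵥ v) • e1 - (1/3 : ℝ) • v = 0 := by
    rcases smul_eq_zero.1 happ with h | h
    · exact absurd h (ne_of_gt hs_pos)
    · exact h
  have hsub' : (e1 ⬝ᵥ v) • e1 = (1/3 : ℝ) • v := sub_eq_zero.1 hsub
  have hdot := congrArg (fun w => e1 ⬝ᵥ w) hsub'
  simp only [dotProduct_smul, smul_eq_mul, he1, mul_one] at hdot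
  have ht0 : e1 ⬝ᵥ v = 0 := by linarith
  rw [ht0, zero_smul] at hsub'
  have hvz : v = 0 := by
    have h13 : (1/3 : ℝ) ≠ 0 := by norm_num
    rcases smul_eq_zero.1 hsub'.symm with h | h
    · exact absurd h h13
    · exact h
  exact hv hvz
end

section
/- A symmetric 3×3 matrix ν ≠ 0 can be written as ν = d⊙n = (d⊗n + n⊗d)/2 for some unit vector n and some vector d with d·n ≥ 0 if and only if, with eigenvalues ordered ν_I ≥ ν_II ≥ ν_III, one has ν_II = 0 and ν_I ≥ 0 ≥ ν_III with trace ν = ν_I + ν_III ≥ 0. -/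
open Matrix

/-- Characterization of jump-compatible directions: a nonzero symmetric 3×3
matrix `ν` with ordered eigenvalues `μ 0 ≥ μ 1 ≥ μ 2` (orthonormal eigenbasis
`e`) can be written `ν = (d⊗n + n⊗d)/2` for some unit `n` and some `d` with
`d·n ≥ 0` if and only if `μ 1 = 0`, `μ 0 ≥ 0 ≥ μ 2` and `μ 0 + μ 2 ≥ 0`. -/
theorem jump_compatible_iff_eigenvalues
    (ν : Matrix (Fin 3) (Fin 3) ℝ) (hν : ν ≠ 0) (hsym : ν.IsSymm)
    (e : Fin 3 → Fin 3 → ℝ) (μ : Fin 3 → ℝ)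
    (horth : ∀ i j, e i ⬝ᵥ e j = if i = j then 1 else 0)
    (heig : ∀ i, ν *ᵥ e i = μ i • e i)
    (hord : μ 1 ≤ μ 0 ∧ μ 2 ≤ μ 1) :
    (∃ n d : Fin 3 → ℝ, n ⬝ᵥ n = 1 ∧ 0 ≤ d ⬝ᵥ n ∧
        ν = (1/2 : ℝ) • (vecMulVec d n + vecMulVec n d))
      ↔ (μ 1 = 0 ∧ 0 ≤ μ 0 ∧ μ 2 ≤ 0 ∧ 0 ≤ μ 0 + μ 2) := by
  have E : Matrix (Fin 3) (Fin 3) ℝ := Matrix.of e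
  have hEET : (Matrix.of e : Matrix (Fin 3) (Fin 3) ℝ) * (Matrix.of e)ᵀ = 1 := by
    ext i j
    have := horth i j
    simp only [Matrix.mul_apply, Matrix.transpose_apply, Matrix.of_apply, Matrix.one_apply]
    simpa [dotProduct] using this
  have hETE : (Matrix.of e : Matrix (Fin 3) (Fin 3) ℝ)ᵀ * (Matrix.of e) = 1 :=
    mul_eq_one_comm.mp hEET
  have hcomp : ∀ k l : Fin 3, (e 0 k * e 0 l + e 1 k * e 1 l + e 2 k * e 2 l)
      = if k = l then 1 else 0 := by
    intro k l
    have := congrFun (congrFun hETE k) l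
    simpa [Matrix.mul_apply, Matrix.transpose_apply, Matrix.one_apply,
      Fin.sum_univ_three] using this
  constructor
  · rintro ⟨n, d, hn, hdn, hvu⟩
    have key : ∀ i j, (e i ⬝ᵥ d) * (e j ⬝ᵥ n) + (e i ⬝ᵥ n) * (e j ⬝ᵥ d)
        = 2 * μ j * (if i = j then 1 else 0) := by
      intro i j
      have h1 : e i ⬝ᵥ (ν *ᵥ e j) = μ j * (if i = j then 1 else 0) := by
        rw [heig j, dotProduct_smul, smul_eq_mul, horth]
      have h2 : e i ⬝ᵥ (ν *ᵥ e j)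
          = ((e i ⬝ᵥ d) * (e j ⬝ᵥ n) + (e i ⬝ᵥ n) * (e j ⬝ᵥ d)) / 2 := by
        rw [hvu]
        simp only [Matrix.add_mulVec, Matrix.smul_mulVec, vecMulVec, Matrix.mulVec,
          dotProduct, Fin.sum_univ_three, Matrix.of_apply, Pi.add_apply, Pi.smul_apply,
          Matrix.smul_apply, Matrix.add_apply, smul_eq_mul]
        ring
      rw [h2] at h1
      linarith
    have μeq : ∀ i, μ i = (e i ⬝ᵥ d) * (e i ⬝ᵥ n) := by
      intro i
      have := key i i
      rw [if_pos rfl] at this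
      linarith
    have hpair : ∀ i j, i ≠ j → μ i * μ j ≤ 0 := by
      intro i j hij
      have h := key i j
      rw [if_neg hij] at h
      have hprod : μ i * μ j = -((e i ⬝ᵥ n) * (e j ⬝ᵥ d)) ^ 2 := by
        rw [μeq i, μeq j]
        linear_combination ((e i ⬝ᵥ n) * (e j ⬝ᵥ d)) * h
      rw [hprod]
      simp [sq_nonneg]
    have htr : μ 0 + μ 1 + μ 2 = d ⬝ᵥ n := by
      have h : (e 0 ⬝ᵥ d) * (e 0 ⬝ᵥ n) + (e 1 ⬝ᵥ d) * (e 1 ⬝ᵥ n)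
          + (e 2 ⬝ᵥ d) * (e 2 ⬝ᵥ n) = d ⬝ᵥ n := by
        simp only [dotProduct, Fin.sum_univ_three]
        have c00 : e 0 0 * e 0 0 + e 1 0 * e 1 0 + e 2 0 * e 2 0 = 1 := by simpa using hcomp 0 0
        have c11 : e 0 1 * e 0 1 + e 1 1 * e 1 1 + e 2 1 * e 2 1 = 1 := by simpa using hcomp 1 1
        have c22 : e 0 2 * e 0 2 + e 1 2 * e 1 2 + e 2 2 * e 2 2 = 1 := by simpa using hcomp 2 2
        have c01 : e 0 0 * e 0 1 + e 1 0 * e 1 1 + e 2 0 * e 2 1 = 0 := by simpa using hcomp 0 1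
        have c02 : e 0 0 * e 0 2 + e 1 0 * e 1 2 + e 2 0 * e 2 2 = 0 := by simpa using hcomp 0 2
        have c12 : e 0 1 * e 0 2 + e 1 1 * e 1 2 + e 2 1 * e 2 2 = 0 := by simpa using hcomp 1 2
        linear_combination (d 0 * n 0) * c00 + (d 1 * n 1) * c11 + (d 2 * n 2) * c22
          + (d 0 * n 1 + d 1 * n 0) * c01 + (d 0 * n 2 + d 2 * n 0) * c02
          + (d 1 * n 2 + d 2 * n 1) * c12
      rw [μeq 0, μeq 1, μeq 2]
      linarith
    have h01 : μ 0 * μ 1 ≤ 0 := hpair 0 1 (by decide)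
    have h12 : μ 1 * μ 2 ≤ 0 := hpair 1 2 (by decide)
    have hμ1 : μ 1 = 0 := by nlinarith [hord.1, hord.2]
    refine ⟨hμ1, by linarith [hord.1], by linarith [hord.2], by linarith⟩
  · rintro ⟨h1, h0, h2, hsum⟩
    have hcol : ν * (Matrix.of e)ᵀ = (Matrix.of e)ᵀ * Matrix.diagonal μ := by
      ext j i
      have := congrFun (heig i) j
      simp only [Matrix.mulVec, dotProduct, Pi.smul_apply, smul_eq_mul] at this
      simp only [Matrix.mul_apply, Matrix.transpose_apply, Matrix.of_apply,
        Matrix.diagonal_apply]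
      rw [this]
      simp [mul_ite, mul_zero, Finset.sum_ite_eq', mul_comm]
    have hspec : ν = (Matrix.of e)ᵀ * Matrix.diagonal μ * (Matrix.of e) := by
      calc ν = ν * ((Matrix.of e)ᵀ * (Matrix.of e)) := by rw [hETE, mul_one]
      _ = (ν * (Matrix.of e)ᵀ) * (Matrix.of e) := by rw [mul_assoc]
      _ = (Matrix.of e)ᵀ * Matrix.diagonal μ * (Matrix.of e) := by rw [hcol]
    have hμ02 : 0 < μ 0 - μ 2 := by
      by_contra h
      push_neg at h
      have hμ0 : μ 0 = 0 := le_antisymm (by linarith) h0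
      have hμ2 : μ 2 = 0 := le_antisymm h2 (by linarith)
      apply hν
      have hD : Matrix.diagonal μ = 0 := by
        ext i j
        rcases Matrix.diagonal_apply μ i j with _
        fin_cases i <;> fin_cases j <;>
          simp [Matrix.diagonal_apply, hμ0, h1, hμ2]
      rw [hspec, hD]
      simp
    set a : ℝ := Real.sqrt (μ 0) with ha
    set b : ℝ := Real.sqrt (-(μ 2)) with hb
    set c : ℝ := Real.sqrt (μ 0 - μ 2) with hc
    have ha2 : a ^ 2 = μ 0 := Real.sq_sqrt h0
    have hb2 : b ^ 2 = -(μ 2) := Real.sq_sqrt (by linarith)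
    have hc2 : c ^ 2 = μ 0 - μ 2 := Real.sq_sqrt (by linarith)
    have hcne : c ≠ 0 := by positivity
    refine ⟨fun k => (a * e 0 k + b * e 2 k) / c,
            fun k => c * (a * e 0 k - b * e 2 k), ?_, ?_, ?_⟩
    · have o00 : e 0 0 * e 0 0 + e 0 1 * e 0 1 + e 0 2 * e 0 2 = 1 := by
        simpa [dotProduct, Fin.sum_univ_three] using horth 0 0
      have o22 : e 2 0 * e 2 0 + e 2 1 * e 2 1 + e 2 2 * e 2 2 = 1 := by
        simpa [dotProduct, Fin.sum_univ_three] using horth 2 2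
      have o02 : e 0 0 * e 2 0 + e 0 1 * e 2 1 + e 0 2 * e 2 2 = 0 := by
        simpa [dotProduct, Fin.sum_univ_three] using horth 0 2
      simp only [dotProduct, Fin.sum_univ_three]
      field_simp
      linear_combination a^2 * o00 + b^2 * o22 + 2*a*b*o02 + ha2 + hb2 - hc2
    · have o00 : e 0 0 * e 0 0 + e 0 1 * e 0 1 + e 0 2 * e 0 2 = 1 := by
        simpa [dotProduct, Fin.sum_univ_three] using horth 0 0
      have o22 : e 2 0 * e 2 0 + e 2 1 * e 2 1 + e 2 2 * e 2 2 = 1 := by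
        simpa [dotProduct, Fin.sum_univ_three] using horth 2 2
      have hval : (fun k => c * (a * e 0 k - b * e 2 k)) ⬝ᵥ
          (fun k => (a * e 0 k + b * e 2 k) / c) = μ 0 + μ 2 := by
        simp only [dotProduct, Fin.sum_univ_three]
        field_simp
        linear_combination a^2 * o00 - b^2 * o22 + ha2 - hb2
      rw [hval]
      exact hsum
    · rw [hspec]
      ext j k
      simp only [Matrix.mul_apply, Matrix.transpose_apply, Matrix.of_apply,
        Matrix.diagonal_apply, Fin.sum_univ_three, Matrix.smul_apply, Matrix.add_apply,
        vecMulVec, smul_eq_mul]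
      norm_num [h1, Fin.ext_iff]
      field_simp
      linear_combination (-(2)*(e 0 j * e 0 k)) * ha2 + (2*(e 2 j * e 2 k)) * hb2
  done
end
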